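/- arXiv:2208.03259 — 6 statements merged into one kernel-verified Lean document; each statement's English description precedes it below -/
import Mathlib

section
/- In the abstract dressing-operator setting, the commutator of X with s⁻¹ is given by X·s⁻¹ − s⁻¹·X = s⁻¹·y, i.e. [X, s⁻¹] = s⁻¹·z·(1−z)⁻¹. (This is the identity [X, S⁻¹] = S⁻¹ Z/(1−Z) from the paper's dressing-operator lemma, using [h, s⁻¹] = −s⁻¹ and the fact that s⁻¹ commutes with any expression in z.) -/
/-!
Conjugating `h * s - s * h = s` by `s⁻¹` gives `h * s⁻¹ - s⁻¹ * h = -s⁻¹`. Since `c` is central,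
`s⁻¹` commutes with `z = c * s ^ 2`, hence with `(1 - z)⁻¹` and with `y`. Commutation with `s⁻¹`
is then a derivation that kills `y`, so it sends `h * y + y * h` to
`-s⁻¹ * y - y * s⁻¹ = -2 • (s⁻¹ * y)`, and the factor `-1/2` in `X` turns this into `s⁻¹ * y`.
-/

section

variable {A : Type*} [Ring A]

theorem Units.mul_inv_sub_inv_mul_eq_neg_inv (u : Aˣ) {h : A} (hh : h * u - u * h = u) :
    h * ↑u⁻¹ - ↑u⁻¹ * h = -↑u⁻¹ :=
  calc h * ↑u⁻¹ - ↑u⁻¹ * h = -(↑u⁻¹ * (h * u - u * h) * ↑u⁻¹) := by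
        simp only [mul_sub, sub_mul, mul_assoc, Units.inv_mul_cancel_left, Units.mul_inv, mul_one,
          neg_sub]
    _ = -↑u⁻¹ := by rw [hh, Units.inv_mul, one_mul]

theorem commutator_anticommutator_of_commute {a h y : A} (hay : Commute a y) :
    (h * y + y * h) * a - a * (h * y + y * h) = (h * a - a * h) * y + y * (h * a - a * h) := by
  linear_combination (norm := noncomm_ring) -(h * hay.eq) - hay.eq * h

end

/-- in the abstract dressing-operator setting (A an associative unital
ℚ-algebra, s invertible with inverse si, h·s − s·h = s, c central, z = c·s²,
g = (1−z)⁻¹, y = z·g, X = −(1/2)(h·y + y·h)), one has [X, s⁻¹] = s⁻¹·z·(1−z)⁻¹,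
i.e. X·si − si·X = si·y. -/
theorem dressing_comm_X_sinv (A : Type*) [Ring A] [Algebra ℚ A]
    (s si h c g z y X : A)
    (hs : s * si = 1) (hs' : si * s = 1)
    (hh : h * s - s * h = s)
    (hc : ∀ a : A, c * a = a * c)
    (hz : z = c * s ^ 2)
    (hg : (1 - z) * g = 1) (hg' : g * (1 - z) = 1)
    (hy : y = z * g)
    (hX : X = -((1 / 2 : ℚ) • (h * y + y * h))) :
    X * si - si * X = si * y := by
  let u : Aˣ := ⟨s, si, hs, hs'⟩
  have hsi_c : Commute si c := (hc si).symm
  have hsi_z : Commute si z :=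
    hz ▸ hsi_c.mul_right ((Commute.refl (u : A)).units_inv_left.pow_right 2)
  have hsi_g : Commute si g :=
    Commute.units_inv_right (u := ⟨1 - z, g, hg, hg'⟩) ((Commute.one_right si).sub_right hsi_z)
  have hsi_y : Commute si y := hy ▸ hsi_z.mul_right hsi_g
  have hh_si : h * si - si * h = -si := u.mul_inv_sub_inv_mul_eq_neg_inv hh
  calc X * si - si * X = -((1 / 2 : ℚ) • ((h * y + y * h) * si - si * (h * y + y * h))) := by
        rw [hX, neg_mul, mul_neg, smul_mul_assoc, mul_smul_comm, smul_sub]; abel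
    _ = -((1 / 2 : ℚ) • (-si * y + y * -si)) := by
        rw [commutator_anticommutator_of_commute hsi_y, hh_si]
    _ = si * y := by
        rw [mul_neg, ← hsi_y.eq, neg_mul]; module
end

section
/- In the abstract dressing-operator setting, the commutator of X² with s⁻² satisfies X²·s⁻² − s⁻²·X² = 2c·(X·g + g·X), i.e. [X², S⁻²] = (t/u)·{X, 1/(1−Z)} in the paper's notation (where t/u = 2c). -/
/-!
Since `c` is central and `⁅h, s⁆ = s`, the element `s⁻²` is an eigenvector of `⁅h, ·⁆` with
weight `-2`, and it commutes with `z = c s²`, hence with `g = (1 - z)⁻¹` and `y = z g`.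
Therefore `⁅X, s⁻²⁆ = -½ (⁅h, s⁻²⁆ y + y ⁅h, s⁻²⁆) = 2 s⁻² y = 2 c g`, and the Leibniz rule
`⁅X², s⁻²⁆ = X ⁅X, s⁻²⁆ + ⁅X, s⁻²⁆ X` gives the claim.
-/

namespace Ring

variable {R : Type*} [Ring R]

theorem lie_mul (a b c : R) : ⁅a, b * c⁆ = ⁅a, b⁆ * c + b * ⁅a, c⁆ := by
  simp only [lie_def]; noncomm_ring

theorem mul_lie (a b c : R) : ⁅a * b, c⁆ = a * ⁅b, c⁆ + ⁅a, c⁆ * b := by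
  simp only [lie_def]; noncomm_ring

theorem sq_lie (a b : R) : ⁅a ^ 2, b⁆ = a * ⁅a, b⁆ + ⁅a, b⁆ * a := by
  rw [pow_two, mul_lie]

theorem lie_units_inv (a : R) (u : Rˣ) : ⁅a, (↑u⁻¹ : R)⁆ = -(↑u⁻¹ * ⁅a, (u : R)⁆ * ↑u⁻¹) := by
  simp [lie_def, mul_sub, sub_mul, mul_assoc]

theorem mul_add_mul_lie_of_commute {h y t : R} (hyt : Commute y t) :
    ⁅h * y + y * h, t⁆ = ⁅h, t⁆ * y + y * ⁅h, t⁆ := by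
  have : y * t - t * y = 0 := sub_eq_zero.mpr hyt.eq
  simp only [lie_def]
  linear_combination (norm := noncomm_ring) h * this + this * h

variable {h a b : R} {m n : ℤ}

theorem lie_mul_of_lie_eq_zsmul (ha : ⁅h, a⁆ = m • a) (hb : ⁅h, b⁆ = n • b) :
    ⁅h, a * b⁆ = (m + n) • (a * b) := by
  rw [lie_mul, ha, hb, add_smul, smul_mul_assoc, mul_smul_comm]

theorem lie_pow_of_lie_eq_zsmul (ha : ⁅h, a⁆ = m • a) (k : ℕ) :
    ⁅h, a ^ k⁆ = (k * m) • a ^ k := by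
  induction k with
  | zero => simp [lie_def]
  | succ k ih => rw [pow_succ, lie_mul_of_lie_eq_zsmul ih ha]; push_cast; ring_nf

theorem lie_units_inv_of_lie_eq_zsmul {u : Rˣ} (hu : ⁅h, (u : R)⁆ = m • (u : R)) :
    ⁅h, (↑u⁻¹ : R)⁆ = (-m) • (↑u⁻¹ : R) := by
  rw [lie_units_inv, hu, mul_smul_comm, smul_mul_assoc, Units.inv_mul, one_mul, neg_smul]

theorem smul_lie {A : Type*} [Ring A] [Algebra ℚ A] (q : ℚ) (a b : A) :
    ⁅q • a, b⁆ = q • ⁅a, b⁆ := by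
  rw [lie_def, lie_def, smul_mul_assoc, mul_smul_comm, smul_sub]

theorem smul_mul_add_mul_lie_of_commute {A : Type*} [Ring A] [Algebra ℚ A] {h y t : A} {m : ℤ}
    (q : ℚ) (hyt : Commute y t) (ht : ⁅h, t⁆ = m • t) :
    ⁅q • (h * y + y * h), t⁆ = (q * m) • (t * y + y * t) := by
  rw [smul_lie, mul_add_mul_lie_of_commute hyt, ht, ← Int.cast_smul_eq_zsmul ℚ, smul_mul_assoc,
    mul_smul_comm, ← smul_add, smul_smul]

end Ring

/-- in the abstract dressing-operator setting, the commutator of X² with s⁻²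
satisfies [X², s⁻²] = 2c·(X·g + g·X), i.e. [X², S⁻²] = (t/u)·{X, 1/(1−Z)}. -/
theorem dressing_comm_Xsq_sinvsq (A : Type*) [Ring A] [Algebra ℚ A]
    (s si h c g z y X : A)
    (hs : s * si = 1) (hs' : si * s = 1)
    (hh : h * s - s * h = s)
    (hc : ∀ a : A, c * a = a * c)
    (hz : z = c * s ^ 2)
    (hg : (1 - z) * g = 1) (hg' : g * (1 - z) = 1)
    (hy : y = z * g)
    (hX : X = -((1 / 2 : ℚ) • (h * y + y * h))) :
    X ^ 2 * si ^ 2 - si ^ 2 * X ^ 2 = 2 * c * (X * g + g * X) := by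
  let u : Aˣ := ⟨s, si, hs, hs'⟩
  let v : Aˣ := ⟨1 - z, g, hg, hg'⟩
  have hs_weight : ⁅h, (u : A)⁆ = (1 : ℤ) • (u : A) := by rw [one_smul]; exact hh
  have hsi2_weight : ⁅h, si ^ 2⁆ = (-2 : ℤ) • si ^ 2 := by
    change ⁅h, (↑u⁻¹ : A) ^ 2⁆ = (-2 : ℤ) • (↑u⁻¹ : A) ^ 2
    rw [Ring.lie_pow_of_lie_eq_zsmul (Ring.lie_units_inv_of_lie_eq_zsmul hs_weight)]
    norm_num
  have hzsi2 : z * si ^ 2 = c := by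
    rw [hz, mul_assoc, show s ^ 2 * si ^ 2 = 1 from (u ^ 2).mul_inv, mul_one]
  have hsi2z : si ^ 2 * z = c := by
    rw [hz, ← mul_assoc, ← hc, mul_assoc, show si ^ 2 * s ^ 2 = 1 from (u ^ 2).inv_mul, mul_one]
  have hzsi2_comm : Commute z (si ^ 2) := hzsi2.trans hsi2z.symm
  have hgsi2 : Commute g (si ^ 2) :=
    Commute.units_inv_left (u := v) ((Commute.one_left _).sub_left hzsi2_comm)
  have hysi2 : Commute y (si ^ 2) := hy ▸ hzsi2_comm.mul_left hgsi2
  have hsi2y : si ^ 2 * y + y * si ^ 2 = 2 * c * g := by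
    rw [hysi2.eq, ← two_mul, hy, ← mul_assoc (si ^ 2), hsi2z, mul_assoc]
  have hXsi2 : ⁅X, si ^ 2⁆ = 2 * c * g := by
    rw [hX, ← neg_smul, Ring.smul_mul_add_mul_lie_of_commute _ hysi2 hsi2_weight, hsi2y]
    norm_num
  rw [← Ring.lie_def, Ring.sq_lie, hXsi2]
  linear_combination (norm := noncomm_ring) -(2 * hc X * g)
end

section
/- In the abstract dressing-operator setting, define E := (1/3)·(X³ + s⁻¹·X² + X·s⁻¹·X + X²·s⁻¹) and D := s⁻¹ + X. Then E·D − D·E = −c·(h·z·g² + z·g²·h), i.e. [E, D̃] = −(t/2u)·{H, Z/(1−Z)²}. (Since dD̃/du = (1/2u){H, Z/(1−Z)²} when Z = (t/2u)S², this is exactly the content of the differential equation dD̃/du + (1/t)[E, D̃] = 0 from the paper's dressing-operator lemma.) -/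
/-!
Put `w := [X, s⁻¹]`. Since `[h, s⁻¹] = -s⁻¹` and `y` commutes with `s⁻¹`, one finds `w = y s⁻¹`,
which commutes with `s⁻¹`; this alone collapses `[E, D]` to `s⁻¹ {X, w} + w²`. As `[h, y]` lies
in the commutative algebra generated by `z`, `g`, `s⁻¹`, the anticommutator `{X, w}` equals
`-{h, y w}`, and moving `s⁻¹` past `h` turns the whole expression into `-{h, w²}`, where
`w² = y² s⁻² = c z g²`.
-/

section
variable {A : Type*} [Ring A]

theorem mul_sub_mul_eq_neg_of_inverse (h : A) {a b : A} (hab : a * b = 1) (hba : b * a = 1) :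
    h * b - b * h = -(b * (h * a - a * h) * b) := by
  linear_combination (norm := noncomm_ring) (b * h) * hab - hba * (h * b)

theorem commute_of_inverse_left {a b x : A} (hab : a * b = 1) (hba : b * a = 1)
    (hx : Commute a x) : Commute b x :=
  Commute.units_inv_left (u := ⟨a, b, hab, hba⟩) hx

theorem mul_sub_mul_central_mul_sq {h s c : A} (hc : Commute c h) (hh : h * s - s * h = s) :
    h * (c * s ^ 2) - c * s ^ 2 * h = c * s ^ 2 + c * s ^ 2 := by
  linear_combination (norm := noncomm_ring) c * s * hh + c * hh * s - hc.eq * s ^ 2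

theorem mul_sub_mul_inverse_one_sub {h z g : A} (hg : (1 - z) * g = 1) (hg' : g * (1 - z) = 1)
    (hhz : h * z - z * h = z + z) : h * g - g * h = g * (z + z) * g := by
  linear_combination (norm := noncomm_ring) mul_sub_mul_eq_neg_of_inverse h hg hg' + g * hhz * g

theorem third_smul_cube_commutator [Algebra ℚ A] (X a : A) (hw : Commute (X * a - a * X) a) :
    ((1 / 3 : ℚ) • (X ^ 3 + a * X ^ 2 + X * a * X + X ^ 2 * a)) * (a + X)
        - (a + X) * ((1 / 3 : ℚ) • (X ^ 3 + a * X ^ 2 + X * a * X + X ^ 2 * a))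
      = a * (X * (X * a - a * X) + (X * a - a * X) * X) + (X * a - a * X) ^ 2 := by
  have key : (X ^ 3 + a * X ^ 2 + X * a * X + X ^ 2 * a) * (a + X)
        - (a + X) * (X ^ 3 + a * X ^ 2 + X * a * X + X ^ 2 * a)
      = (3 : ℚ) • (a * (X * (X * a - a * X) + (X * a - a * X) * X) + (X * a - a * X) ^ 2) := by
    rw [show (3 : ℚ) = 1 + 1 + 1 by norm_num, add_smul, add_smul, one_smul]
    linear_combination (norm := noncomm_ring) hw.eq * X + hw.eq * X + X * hw.eq
  rw [smul_mul_assoc, mul_smul_comm, ← smul_sub, key, smul_smul]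
  norm_num

section HalfAnticommutator
variable [Module ℚ A] {h y X : A}

theorem eq_of_add_self_eq_add_self {x x' : A} (hx : x + x = x' + x') : x = x' := by
  have := congrArg ((1 / 2 : ℚ) • ·) hx
  simpa [← two_smul ℚ, smul_smul] using this

theorem add_self_eq_neg_of_eq_neg_half_smul {J : A} (hX : X = -((1 / 2 : ℚ) • J)) :
    X + X = -J := by
  rw [hX, ← neg_add, ← two_smul ℚ, smul_smul]
  norm_num

theorem commutator_neg_half_anticomm {a : A} (hX : X = -((1 / 2 : ℚ) • (h * y + y * h)))
    (hya : Commute y a) (hha : h * a - a * h = -a) :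
    X * a - a * X = y * a := by
  have hX2 := add_self_eq_neg_of_eq_neg_half_smul hX
  apply eq_of_add_self_eq_add_self
  linear_combination (norm := noncomm_ring)
    hX2 * a - a * hX2 - hha * y - y * hha - hya.eq * h - hya.eq - h * hya.eq

theorem anticomm_neg_half_anticomm {w : A} (hX : X = -((1 / 2 : ℚ) • (h * y + y * h)))
    (hyw : Commute y w) (hhyw : Commute (h * y - y * h) w) :
    X * w + w * X = -(h * (y * w) + y * w * h) := by
  have hX2 := add_self_eq_neg_of_eq_neg_half_smul hX
  apply eq_of_add_self_eq_add_self
  linear_combination (norm := noncomm_ring)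
    hX2 * w + w * hX2 + hhyw.eq + hyw.eq * h + hyw.eq * h

end HalfAnticommutator

theorem third_smul_cube_commutator_of_neg_half_anticomm [Algebra ℚ A] {h y X a : A}
    (hX : X = -((1 / 2 : ℚ) • (h * y + y * h)))
    (hya : Commute y a) (hha : h * a - a * h = -a) (hhy : Commute (h * y - y * h) (y * a)) :
    ((1 / 3 : ℚ) • (X ^ 3 + a * X ^ 2 + X * a * X + X ^ 2 * a)) * (a + X)
        - (a + X) * ((1 / 3 : ℚ) • (X ^ 3 + a * X ^ 2 + X * a * X + X ^ 2 * a))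
      = -(h * (y * a) ^ 2 + (y * a) ^ 2 * h) := by
  have hw : X * a - a * X = y * a := commutator_neg_half_anticomm hX hya hha
  have hyw : Commute y (y * a) := (Commute.refl y).mul_right hya
  have haw : a * (y * (y * a)) = (y * a) ^ 2 := by rw [← mul_assoc, ← hya.eq, sq]
  rw [third_smul_cube_commutator X a (hw ▸ hya.mul_left (.refl a)), hw,
    anticomm_neg_half_anticomm hX hyw hhy]
  linear_combination (norm := noncomm_ring) hha * (y * (y * a)) - haw - h * haw - haw * h

end

/-- in the abstract dressing-operator setting, with
E := (1/3)(X³ + s⁻¹X² + Xs⁻¹X + X²s⁻¹) and D̃ := s⁻¹ + X, one has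
[E, D̃] = −c·(h·z·g² + z·g²·h), i.e. [E, D̃] = −(t/2u)·{H, Z/(1−Z)²}. -/
theorem dressing_comm_E_D (A : Type*) [Ring A] [Algebra ℚ A]
    (s si h c g z y X E D : A)
    (hs : s * si = 1) (hs' : si * s = 1)
    (hh : h * s - s * h = s)
    (hc : ∀ a : A, c * a = a * c)
    (hz : z = c * s ^ 2)
    (hg : (1 - z) * g = 1) (hg' : g * (1 - z) = 1)
    (hy : y = z * g)
    (hX : X = -((1 / 2 : ℚ) • (h * y + y * h)))
    (hE : E = (1 / 3 : ℚ) • (X ^ 3 + si * X ^ 2 + X * si * X + X ^ 2 * si))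
    (hD : D = si + X) :
    E * D - D * E = -(c * (h * (z * g ^ 2) + z * g ^ 2 * h)) := by
  have hcen : ∀ a : A, Commute c a := hc
  have hssi : Commute s si := hs.trans hs'.symm
  have hzsi : Commute z si := hz ▸ (hcen si).mul_left (hssi.pow_left 2)
  have hzg : Commute z g :=
    (commute_of_inverse_left hg hg' ((Commute.one_left z).sub_left (.refl z))).symm
  have hgsi : Commute g si := commute_of_inverse_left hg hg' ((Commute.one_left si).sub_left hzsi)
  have hsi : h * si - si * h = -si := by
    rw [mul_sub_mul_eq_neg_of_inverse h hs hs', hh, hs', one_mul]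
  have hhz : h * z - z * h = z + z := hz ▸ mul_sub_mul_central_mul_sq (hcen h) hh
  have hhy : h * y - y * h = g * (z + z) * g := by
    rw [show y = g - 1 by rw [hy]; linear_combination (norm := noncomm_ring) -hg]
    linear_combination (norm := noncomm_ring) mul_sub_mul_inverse_one_sub hg hg' hhz
  subst hy
  have hgw : Commute g (z * g * si) := (hzg.symm.mul_right (.refl g)).mul_right hgsi
  have hzw : Commute z (z * g * si) := ((Commute.refl z).mul_right hzg).mul_right hzsi
  have hzsi2 : z * si ^ 2 = c := by rw [hz, mul_assoc, ← hssi.mul_pow, hs, one_pow, mul_one]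
  have hw2 : (z * g * si) ^ 2 = c * (z * g ^ 2) := by
    rw [(hzsi.mul_left hgsi).mul_pow, ((hzsi.mul_left hgsi).pow_pow 2 2).eq, hzg.mul_pow, sq z,
      mul_assoc z z, ← mul_assoc (si ^ 2), ← (hzsi.pow_right 2).eq, hzsi2]
  rw [hE, hD, third_smul_cube_commutator_of_neg_half_anticomm hX (hzsi.mul_left hgsi) hsi
    (hhy ▸ (hgw.mul_left (hzw.add_left hzw)).mul_left hgw), hw2]
  linear_combination (norm := noncomm_ring) hc h * (z * g ^ 2)
end

section
/- In A⟦u⟧, the commutator of O := s·Φ with h is given by O·h − h·O = (2u·s⁻¹ − s)·Φ. (This is the identity [Õ, H] = 2u·S⁻¹·(1−Z)·e^{u/S²} from the proof of the dressing theorem, using [h, s^m] = m·s^m and 2u·S⁻¹·(1−Z) = 2u·s⁻¹ − s for Z = s²/(2u).) -/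
/-!
Commutation with `h` acts on powers of `s⁻¹` as the Euler operator, `[s⁻ᵐ, h] = m s⁻ᵐ`. Hence on
`Φ = e^{u s⁻²}` it acts as `2u d/du`, giving `[Φ, h] = 2u s⁻² Φ`; multiplying by `s` and adding
`[s, h] Φ = -s Φ` yields `[O, h] = (2u s⁻¹ - s) Φ`.
-/

open PowerSeries

section Commutator

variable {A : Type*} [Ring A]

theorem pow_mul_sub_mul_pow_of_mul_sub_mul_eq_self {x h : A} (hx : x * h - h * x = x) (m : ℕ) :
    x ^ m * h - h * x ^ m = m • x ^ m := by
  induction m with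
  | zero => simp
  | succ m ih =>
    calc x ^ (m + 1) * h - h * x ^ (m + 1)
        = x ^ m * (x * h - h * x) + (x ^ m * h - h * x ^ m) * x := by noncomm_ring
      _ = (m + 1) • x ^ (m + 1) := by
        rw [hx, ih, smul_mul_assoc, ← pow_succ, add_smul, one_smul, add_comm]

theorem mul_sub_mul_eq_self_of_mul_eq_one {s si h : A} (hs : s * si = 1) (hs' : si * s = 1)
    (hh : h * s - s * h = s) : si * h - h * si = si :=
  calc si * h - h * si = si * (h * s - s * h) * si := by
        simp only [mul_sub, sub_mul, ← mul_assoc, hs', one_mul]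
        simp only [mul_assoc, hs, mul_one]
    _ = si := by rw [hh, hs', one_mul]

end Commutator

namespace PowerSeries

variable {A : Type*} [Ring A]

theorem mk_mul_C_sub_C_mul_mk (f : ℕ → A) (a : A) :
    mk f * C a - C a * mk f = mk fun n => f n * a - a * f n := by
  ext n
  simp [coeff_mul_C, coeff_C_mul]

theorem mul_C_sub_C_mul_of_eq_mk_exp_sq [Algebra ℚ A] {x h : A} (hx : x * h - h * x = x)
    {Φ : A⟦X⟧} (hΦ : Φ = mk fun n => ((1 : ℚ) / n.factorial) • x ^ (2 * n)) :
    Φ * C h - C h * Φ = 2 * X * C (x ^ 2) * Φ := by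
  subst hΦ
  rw [mk_mul_C_sub_C_mul_mk]
  ext (_ | n)
  · simp [mul_assoc]
  · simp only [smul_mul_assoc, mul_smul_comm, ← smul_sub,
      pow_mul_sub_mul_pow_of_mul_sub_mul_eq_self hx, coeff_mk, mul_assoc]
    have hpow : x ^ 2 * x ^ (2 * n) = x ^ (2 * (n + 1)) := by rw [← pow_add]; ring_nf
    rw [two_mul (X * _), map_add, coeff_succ_X_mul, coeff_C_mul, coeff_mk, mul_smul_comm, hpow,
      ← two_smul ℚ, smul_smul, ← Nat.cast_smul_eq_nsmul ℚ, smul_smul]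
    congr 1
    rw [Nat.factorial_succ]
    push_cast
    field_simp

end PowerSeries

/-- with Φ = e^{u/s²} = Σ_{n≥0} (u^n/n!)·s^{−2n} and O = s·Φ in A⟦u⟧,
one has [O, h] = (2u·s⁻¹ − s)·Φ, i.e. O·h − h·O = (2u·si − s)·Φ. -/
theorem comm_O_h (A : Type*) [Ring A] [Algebra ℚ A]
    (s si h : A)
    (hs : s * si = 1) (hs' : si * s = 1)
    (hh : h * s - s * h = s)
    (Φ O : PowerSeries A)
    (hΦ : Φ = PowerSeries.mk fun n => ((1 : ℚ) / n.factorial) • si ^ (2 * n))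
    (hO : O = PowerSeries.C s * Φ) :
    O * PowerSeries.C h - PowerSeries.C h * O
      = (2 * PowerSeries.X * PowerSeries.C si - PowerSeries.C s) * Φ := by
  have hΦh : Φ * C h - C h * Φ = 2 * X * C (si ^ 2) * Φ :=
    mul_C_sub_C_mul_of_eq_mk_exp_sq (mul_sub_mul_eq_self_of_mul_eq_one hs hs' hh) hΦ
  have hs2X : C s * (2 * X) = 2 * X * C s :=
    ((Commute.ofNat_right (C s) 2).mul_right (commute_X (C s))).eq
  have hs_si_sq : s * si ^ 2 = si := by rw [sq, ← mul_assoc, hs, one_mul]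
  calc O * C h - C h * O = C s * (Φ * C h - C h * Φ) - C (h * s - s * h) * Φ := by
        rw [hO, map_sub, map_mul, map_mul]; noncomm_ring
    _ = 2 * X * C (s * si ^ 2) * Φ - C s * Φ := by
        rw [hΦh, hh, map_mul, ← mul_assoc, ← mul_assoc, hs2X, mul_assoc (2 * X)]
    _ = (2 * X * C si - C s) * Φ := by rw [hs_si_sq, sub_mul]
end

section
/- In A⟦u⟧, the commutator of O := s·Φ with X is given by O·X − X·O = −s·Φ. (This is the identity [Õ, X] = −S·e^{u/S²} from the proof of the dressing theorem, obtained from [Õ, X] = −(1/2){[Õ, H], Z/(1−Z)} since Õ commutes with all expressions in s.) -/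
/-!
All series involved have coefficients in the commutative algebra generated by `s` and `s⁻¹`,
and `[s⁻², h] = 2 s⁻²` gives `[s⁻²ⁿ, h] = 2n s⁻²ⁿ`. For the exponential `Φ = e^{u s⁻²}` this
becomes `[Φ, h] = 2u s⁻² Φ`, hence `[O, h] = P O` with `P = 2u s⁻² - 1`. The geometric series
`Y = -(1 - 2u s⁻²)⁻¹` is the inverse of `P` and commutes with `O`, so
`[O, X] = -½ ([O, h] Y + Y [O, h]) = -½ (P Y + Y P) O = -O`.
-/

open PowerSeries

section Commutators

variable {R : Type*} [Ring R]

theorem mul_sub_mul_eq_self_of_inverse {a b x : R} (hab : a * b = 1) (hba : b * a = 1)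
    (hx : x * a - a * x = a) : b * x - x * b = b :=
  calc b * x - x * b = b * (x * a - a * x) * b := by
        rw [mul_sub, sub_mul, ← mul_assoc b x, mul_assoc (b * x), hab, mul_one,
          ← mul_assoc b a, hba, one_mul]
    _ = b := by rw [hx, mul_assoc, hab, mul_one]

variable [Algebra ℚ R]

theorem pow_mul_sub_mul_pow_eq_smul {a x : R} {r : ℚ} (h : a * x - x * a = r • a) (n : ℕ) :
    a ^ n * x - x * a ^ n = (n * r) • a ^ n := by
  induction n with
  | zero => simp
  | succ n ih =>
    calc a ^ (n + 1) * x - x * a ^ (n + 1)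
        = a ^ n * (a * x - x * a) + (a ^ n * x - x * a ^ n) * a := by noncomm_ring
      _ = ((n + 1 : ℕ) * r) • a ^ (n + 1) := by
        rw [h, ih, mul_smul_comm, smul_mul_assoc, ← pow_succ]
        push_cast
        module

theorem commutator_neg_half_anticommutator_eq_neg {o x y p : R}
    (hpy : p * y = 1) (hyp : y * p = 1) (hoy : Commute o y) (hox : o * x - x * o = p * o) :
    o * -((1 / 2 : ℚ) • (x * y + y * x)) - -((1 / 2 : ℚ) • (x * y + y * x)) * o = -o := by
  have hxy : o * (x * y) - x * y * o = o :=
    calc o * (x * y) - x * y * o = (o * x - x * o) * y + x * (o * y - y * o) := by noncomm_ring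
      _ = o := by rw [hox, hoy.eq, sub_self, mul_zero, add_zero, mul_assoc, hoy.eq,
          ← mul_assoc, hpy, one_mul]
  have hyx : o * (y * x) - y * x * o = o :=
    calc o * (y * x) - y * x * o = y * (o * x - x * o) + (o * y - y * o) * x := by noncomm_ring
      _ = o := by rw [hox, hoy.eq, sub_self, zero_mul, add_zero, ← mul_assoc, hyp, one_mul]
  calc o * -((1 / 2 : ℚ) • (x * y + y * x)) - -((1 / 2 : ℚ) • (x * y + y * x)) * o
      = -((1 / 2 : ℚ) • ((o * (x * y) - x * y * o) + (o * (y * x) - y * x * o))) := by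
        simp only [mul_neg, neg_mul, mul_smul_comm, smul_mul_assoc, mul_add, add_mul]
        module
    _ = -o := by rw [hxy, hyx]; module

end Commutators

namespace PowerSeries

variable {R : Type*} [Ring R]

theorem commute_of_forall_commute_coeff {f g : R⟦X⟧}
    (h : ∀ i j, Commute (coeff i f) (coeff j g)) : Commute f g := by
  ext n
  rw [coeff_mul, coeff_mul, ← Finset.Nat.sum_antidiagonal_swap]
  exact Finset.sum_congr rfl fun ij _ => (h ij.2 ij.1).eq

theorem one_sub_X_mul_C_mul_mk_pow (a : R) : (1 - X * C a) * mk (a ^ ·) = 1 := by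
  ext (_ | n)
  · simp
  · rw [sub_mul, one_mul, mul_assoc, map_sub, coeff_succ_X_mul, coeff_C_mul, coeff_mk,
      coeff_mk, coeff_one, ← pow_succ', sub_self, if_neg n.succ_ne_zero]

theorem mk_pow_mul_one_sub_X_mul_C (a : R) : mk (a ^ ·) * (1 - X * C a) = 1 := by
  ext (_ | n)
  · simp
  · rw [mul_sub, mul_one, ← mul_assoc, (commute_X _).eq, mul_assoc, map_sub,
      coeff_succ_X_mul, coeff_mul_C, coeff_mk, coeff_mk, coeff_one, ← pow_succ, sub_self,
      if_neg n.succ_ne_zero]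

variable [Algebra ℚ R]

def scaledExp (a : R) : R⟦X⟧ := mk fun n => ((1 : ℚ) / n.factorial) • a ^ n

theorem scaledExp_mul_C_sub_C_mul {a x : R} {r : ℚ} (h : a * x - x * a = r • a) :
    scaledExp a * C x - C x * scaledExp a = X * C (r • a) * scaledExp a := by
  ext (_ | n)
  · simp [scaledExp]
  · rw [map_sub, coeff_mul_C, coeff_C_mul, mul_assoc, coeff_succ_X_mul, coeff_C_mul, scaledExp,
      coeff_mk, coeff_mk, smul_mul_assoc, mul_smul_comm, ← smul_sub,
      pow_mul_sub_mul_pow_eq_smul h, smul_mul_smul_comm, ← pow_succ', smul_smul]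
    congr 1
    push_cast [Nat.factorial_succ]
    field_simp

end PowerSeries

/-- with Φ = e^{u/s²}, O = s·Φ, Y = −1 − Σ_{n≥1} (2u)^n·s^{−2n}
(the expansion of Z/(1−Z) for Z = s²/(2u)) and X = −(1/2)(h·Y + Y·h) in A⟦u⟧,
one has [O, X] = −s·Φ, i.e. O·X − X·O = −(s·Φ). -/
theorem comm_O_X (A : Type*) [Ring A] [Algebra ℚ A]
    (s si h : A)
    (hs : s * si = 1) (hs' : si * s = 1)
    (hh : h * s - s * h = s)
    (Φ O Y X : PowerSeries A)
    (hΦ : Φ = PowerSeries.mk fun n => ((1 : ℚ) / n.factorial) • si ^ (2 * n))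
    (hO : O = PowerSeries.C s * Φ)
    (hY : Y = PowerSeries.mk fun n =>
      if n = 0 then -1 else -(((2 : ℚ) ^ n) • si ^ (2 * n)))
    (hX : X = -((1 / 2 : ℚ) • (PowerSeries.C h * Y + Y * PowerSeries.C h))) :
    O * X - X * O = -(PowerSeries.C s * Φ) := by
  set c : A := (2 : ℚ) • si ^ 2
  have hs_si : Commute s si := hs.trans hs'.symm
  have hs_c : Commute s c := (hs_si.pow_right 2).smul_right 2
  have hsi_h : si * h - h * si = (1 : ℚ) • si := by
    rw [one_smul]; exact mul_sub_mul_eq_self_of_inverse hs hs' hh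
  have hsi2_h : si ^ 2 * h - h * si ^ 2 = (2 : ℚ) • si ^ 2 := by
    simpa using pow_mul_sub_mul_pow_eq_smul hsi_h 2
  have hΦ_exp : Φ = scaledExp (si ^ 2) := by simp only [hΦ, scaledExp, pow_mul]
  have hY_geom : Y = -mk (c ^ ·) := by
    ext (_ | n)
    · simp [hY]
    · simp [hY, c, smul_pow, pow_mul]
  have hO_h : O * C h - C h * O = (PowerSeries.X * C c - 1) * O :=
    calc O * C h - C h * O = C s * (Φ * C h - C h * Φ) - C (h * s - s * h) * Φ := by
          rw [hO, map_sub, map_mul, map_mul]; noncomm_ring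
      _ = (PowerSeries.X * C c - 1) * O := by
        rw [hΦ_exp, scaledExp_mul_C_sub_C_mul hsi2_h, hh, hO, hΦ_exp, sub_mul, one_mul,
          ← mul_assoc, ((commute_X _).mul_right (hs_c.map C)).eq, mul_assoc]
  have hO_Y : Commute O Y := commute_of_forall_commute_coeff fun i j => by
    rw [hO, hY_geom, coeff_C_mul, hΦ_exp, scaledExp, coeff_mk, map_neg, coeff_mk]
    exact ((hs_c.pow_right j).mul_left
      ((((Commute.refl (si ^ 2)).smul_right 2).pow_pow i j).smul_left _)).neg_right
  rw [hX, ← hO]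
  refine commutator_neg_half_anticommutator_eq_neg (p := PowerSeries.X * C c - 1)
    ?_ ?_ hO_Y hO_h
  · rw [hY_geom, mul_neg, ← neg_mul, neg_sub, one_sub_X_mul_C_mul_mk_pow]
  · rw [hY_geom, neg_mul, ← mul_neg, neg_sub, mk_pow_mul_one_sub_X_mul_C]
end

section
/- Let z, w ∈ ℂ satisfy |z| < |w|, and assume z is not a negative odd integer (so that (z−1)/2 + j ≠ 0 for every integer j ≥ 1). Then the series Σ_{k=1}^{∞} (k − 1/2) · (z/w)^k · ( ∏_{j=1}^{k−1} ((w+1)/2 − j) ) / ( ∏_{j=1}^{k} ((z−1)/2 + j) ) converges absolutely, and its sum equals z/(z+w). (This is the evaluation of the positive-energy part C₊ in the computation of the commutator [𝓑̃(z), 𝓑̃(w)] = (zw/u)·δ(z,−w): the k-th term is (k − 1/2)(z/w)^k / ((z'+1)_k (w'+1)_{1−k}) with z' = (z−1)/2, w' = (w−1)/2 and Pochhammer symbols (x)_k, since 1/(w'+1)_{1−k} = ∏_{j=1}^{k−1}(w'+1−j).) -/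
open scoped BigOperators

/-- The k-th term of the series C₊ in the computation of the commutator
[𝓑̃(z), 𝓑̃(w)]: (k − 1/2)·(z/w)^k·(∏_{j=1}^{k−1}((w+1)/2 − j))/(∏_{j=1}^{k}((z−1)/2 + j)),
i.e. (k − 1/2)(z/w)^k / ((z'+1)_k (w'+1)_{1−k}) with z' = (z−1)/2, w' = (w−1)/2. -/
noncomputable def Cplusterm (z w : ℂ) (k : ℕ) : ℂ :=
  ((k : ℂ) - 1 / 2) * (z / w) ^ k *
    (∏ j ∈ Finset.Icc 1 (k - 1), ((w + 1) / 2 - (j : ℂ))) /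
    (∏ j ∈ Finset.Icc 1 k, ((z - 1) / 2 + (j : ℂ)))

/-! The series telescopes. Put
`T n = w/(z+w) · (z/w)^(n+1) · ∏_{j=1}^{n} ((w+1)/2 − j)/((z−1)/2 + j)`, so that `T (n+1) = ρ n · T n`
with `ρ n = (z/w)((w+1)/2 − (n+1))/((z−1)/2 + (n+1))`. The identity
`1 − ρ n = (n + 1/2)(z+w) / (w((z−1)/2 + n + 1))` shows that `T n − T (n+1)` is the `(n+1)`-st term.
As `ρ n → −z/w` and `|z/w| < 1`, the ratio test makes `T` absolutely summable; hence `T n → 0` and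
the series sums to `T 0 = z/(z+w)`. -/

open Filter Topology Finset

theorem hasSum_sub_succ_of_tendsto_zero {G : Type*} [AddCommGroup G] [TopologicalSpace G]
    [IsTopologicalAddGroup G] [T2Space G] {g : ℕ → G}
    (hs : Summable fun n ↦ g n - g (n + 1)) (hg : Tendsto g atTop (𝓝 0)) :
    HasSum (fun n ↦ g n - g (n + 1)) (g 0) := by
  have hpartial : Tendsto (fun n ↦ ∑ i ∈ range n, (g i - g (i + 1))) atTop (𝓝 (g 0)) := by
    simp only [sum_range_sub']
    simpa using (tendsto_const_nhds (x := g 0)).sub hg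
  have h := hs.hasSum
  rwa [tendsto_nhds_unique h.tendsto_sum_nat hpartial] at h

theorem summable_norm_of_eq_smul_of_tendsto {𝕜 E : Type*} [NormedField 𝕜]
    [SeminormedAddCommGroup E] [NormedSpace 𝕜 E] {f : ℕ → E} {ρ : ℕ → 𝕜} {L : 𝕜}
    (hf : ∀ n, f (n + 1) = ρ n • f n) (hρ : Tendsto ρ atTop (𝓝 L)) (hL : ‖L‖ < 1) :
    Summable fun n ↦ ‖f n‖ := by
  obtain ⟨r, hLr, hr1⟩ := exists_between hL
  refine summable_of_ratio_norm_eventually_le (f := fun n ↦ ‖f n‖) hr1 ?_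
  have hρr : ∀ᶠ n in atTop, ‖ρ n‖ ≤ r := (tendsto_norm.comp hρ).eventually_le_const hLr
  filter_upwards [hρr] with n hn
  simp only [hf, norm_smul, norm_mul, norm_norm]
  exact mul_le_mul_of_nonneg_right hn (norm_nonneg (f n))

theorem half_sub_one_add_natCast_ne_zero {z : ℂ} (hz : ∀ n : ℕ, z ≠ -(2 * (n : ℂ) + 1)) {j : ℕ}
    (hj : 1 ≤ j) : (z - 1) / 2 + (j : ℂ) ≠ 0 := by
  intro h
  apply hz (j - 1)
  push_cast [Nat.cast_sub hj]
  linear_combination 2 * h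

section Cplus

variable (z w : ℂ)

noncomputable def cplusRatio (n : ℕ) : ℂ :=
  z / w * (((w + 1) / 2 - (n + 1)) / ((z - 1) / 2 + (n + 1)))

noncomputable def cplusTail (n : ℕ) : ℂ :=
  w / (z + w) * (z / w) ^ (n + 1) *
    ∏ j ∈ Icc 1 n, (((w + 1) / 2 - (j : ℂ)) / ((z - 1) / 2 + (j : ℂ)))

theorem cplusTail_zero (hw : w ≠ 0) : cplusTail z w 0 = z / (z + w) := by
  rw [cplusTail, Icc_eq_empty_of_lt zero_lt_one, prod_empty, zero_add, pow_one]
  field_simp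

theorem cplusTail_succ (n : ℕ) : cplusTail z w (n + 1) = cplusRatio z w n * cplusTail z w n := by
  rw [cplusTail, cplusTail, prod_Icc_succ_top (Nat.le_add_left 1 n), cplusRatio]
  push_cast
  ring

theorem tendsto_cplusRatio : Tendsto (cplusRatio z w) atTop (𝓝 (-(z / w))) := by
  have h := (tendsto_add_mul_div_add_mul_atTop_nhds ((w + 1) / 2 - 1) ((z - 1) / 2 + 1) (-1)
    one_ne_zero).const_mul (z / w)
  convert h using 2 with n
  · rw [cplusRatio]; ring
  · ring

theorem Cplusterm_succ_eq_cplusTail_sub (hw : w ≠ 0) (hzw : z + w ≠ 0)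
    (hden : ∀ j : ℕ, 1 ≤ j → (z - 1) / 2 + (j : ℂ) ≠ 0) (n : ℕ) :
    Cplusterm z w (n + 1) = cplusTail z w n - cplusTail z w (n + 1) := by
  have hQ : ∏ j ∈ Icc 1 n, ((z - 1) / 2 + (j : ℂ)) ≠ 0 :=
    prod_ne_zero_iff.mpr fun j hj ↦ hden j (mem_Icc.mp hj).1
  have hd : (z - 1) / 2 + ((n : ℂ) + 1) ≠ 0 := mod_cast hden (n + 1) (Nat.le_add_left 1 n)
  have hstep : 1 - cplusRatio z w n =
      ((n + 1 : ℂ) - 1 / 2) * (z + w) / (w * ((z - 1) / 2 + ((n : ℂ) + 1))) := by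
    rw [cplusRatio, div_mul_div_comm, one_sub_div (mul_ne_zero hw hd)]
    ring
  rw [cplusTail_succ, ← one_sub_mul, hstep, Cplusterm, cplusTail, Nat.add_sub_cancel,
    prod_Icc_succ_top (Nat.le_add_left 1 n), prod_div_distrib]
  push_cast
  generalize (z - 1) / 2 + ((n : ℂ) + 1) = d at hd ⊢
  generalize ∏ j ∈ Icc 1 n, ((z - 1) / 2 + (j : ℂ)) = Q at hQ ⊢
  field_simp

end Cplus

/-- for z, w ∈ ℂ with |z| < |w| and z not a negative odd integer, the series
Σ_{k=1}^{∞} (k − 1/2)·(z/w)^k·(∏_{j=1}^{k−1}((w+1)/2 − j))/(∏_{j=1}^{k}((z−1)/2 + j))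
converges absolutely, with sum z/(z+w). -/
theorem Cplus_eval (z w : ℂ)
    (hzw : ‖z‖ < ‖w‖)
    (hz : ∀ n : ℕ, z ≠ -(2 * (n : ℂ) + 1)) :
    Summable (fun k : ℕ => ‖Cplusterm z w (k + 1)‖) ∧
      HasSum (fun k : ℕ => Cplusterm z w (k + 1)) (z / (z + w)) := by
  have hw : w ≠ 0 := by
    rintro rfl
    exact (norm_nonneg z).not_gt (by simpa using hzw)
  have hzw' : z + w ≠ 0 := fun h ↦ by
    rw [eq_neg_of_add_eq_zero_left h, norm_neg] at hzw
    exact hzw.false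
  have hterm := Cplusterm_succ_eq_cplusTail_sub z w hw hzw'
    fun _ ↦ half_sub_one_add_natCast_ne_zero hz
  have hratio : ‖-(z / w)‖ < 1 := by
    rwa [norm_neg, norm_div, div_lt_one (norm_pos_iff.mpr hw)]
  have htail : Summable fun n ↦ ‖cplusTail z w n‖ :=
    summable_norm_of_eq_smul_of_tendsto (cplusTail_succ z w) (tendsto_cplusRatio z w) hratio
  have habs : Summable fun k ↦ ‖Cplusterm z w (k + 1)‖ :=
    .of_nonneg_of_le (fun _ ↦ norm_nonneg _) (fun k ↦ hterm k ▸ norm_sub_le _ _)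
      (htail.add ((summable_nat_add_iff 1).mpr htail))
  refine ⟨habs, ?_⟩
  simp_rw [hterm, ← cplusTail_zero z w hw]
  exact hasSum_sub_succ_of_tendsto_zero (by simpa only [hterm] using habs.of_norm)
    htail.of_norm.tendsto_atTop_zero
end
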